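/- Let H be a self-adjoint operator on a Hilbert space, let E be an orthogonal projection, and write H = V + εΦ where V is self-adjoint, Φ is bounded self-adjoint, and ε > 0. Suppose that for real numbers α < β: ‖(V − μ)ψ''‖ ≥ ((β−α)/2)‖ψ''‖ for all ψ'' in the range of (I−E), and ‖(V − μ)ψ'‖ ≤ ((β−α)/2)‖ψ'‖ for all ψ' in the range of E, where μ = (α+β)/2. Then for any unit vector ψ with ‖Eψ‖ ≤ cε, one has ‖(H − μ)ψ‖ ≥ ((β−α)/2)(1 − cε) − ε‖Φ‖ − ((β−α)/2)·cε. -/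

import Mathlib

theorem stmt8 {H : Type*} [NormedAddCommGroup H] [InnerProductSpace ℂ H] [CompleteSpace H]
    (V Φ E : H →L[ℂ] H) (hV : IsSelfAdjoint V) (hΦ : IsSelfAdjoint Φ)
    (hE : IsSelfAdjoint E) (hE2 : E * E = E) (hVE : V * E = E * V)
    (ε c : ℝ) (hε : 0 < ε) (hc : 0 < c) (α β : ℝ) (hαβ : α < β)
    (hgap : ∀ ψ'' ∈ LinearMap.range ((1 - E : H →L[ℂ] H) : H →ₗ[ℂ] H),
      ((β - α) / 2) * ‖ψ''‖ ≤ ‖V ψ'' - (((α + β) / 2 : ℝ) : ℂ) • ψ''‖)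
    (hsmall : ∀ ψ' ∈ LinearMap.range (E : H →ₗ[ℂ] H),
      ‖V ψ' - (((α + β) / 2 : ℝ) : ℂ) • ψ'‖ ≤ ((β - α) / 2) * ‖ψ'‖)
    (ψ : H) (hψ : ‖ψ‖ = 1) (hEψ : ‖E ψ‖ ≤ c * ε) :
    ((β - α) / 2) * (1 - c * ε) - ε * ‖Φ‖ - ((β - α) / 2) * (c * ε) ≤
      ‖(V + (ε : ℂ) • Φ) ψ - (((α + β) / 2 : ℝ) : ℂ) • ψ‖ := by
  set μ : ℂ := (((α + β) / 2 : ℝ) : ℂ) with hμ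
  have hmem'' : ψ - E ψ ∈ LinearMap.range ((1 - E : H →L[ℂ] H) : H →ₗ[ℂ] H) :=
    ⟨ψ, by simp [ContinuousLinearMap.sub_apply]⟩
  have h1 := hgap (ψ - E ψ) hmem''
  have h2 := hsmall (E ψ) ⟨ψ, rfl⟩
  have hg : 0 ≤ (β - α) / 2 := by linarith
  have hnorm'' : 1 - c * ε ≤ ‖ψ - E ψ‖ := by
    have := norm_sub_norm_le ψ (E ψ)
    linarith [hEψ, hψ ▸ this]
  have hΦψ : ‖(ε : ℂ) • Φ ψ‖ ≤ ε * ‖Φ‖ := by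
    rw [norm_smul]
    have h := Φ.le_opNorm ψ
    rw [hψ, mul_one] at h
    simp only [Complex.norm_real, Real.norm_eq_abs, abs_of_pos hε]
    nlinarith [hε.le, norm_nonneg (Φ ψ)]
  have hsplit : V ψ - μ • ψ =
      (V (ψ - E ψ) - μ • (ψ - E ψ)) + (V (E ψ) - μ • E ψ) := by
    rw [map_sub, smul_sub]; abel
  have hVψ : ‖V (ψ - E ψ) - μ • (ψ - E ψ)‖ - ‖V (E ψ) - μ • E ψ‖ ≤ ‖V ψ - μ • ψ‖ := by
    rw [hsplit]
    have := norm_add_le (V (ψ - E ψ) - μ • (ψ - E ψ)) (V (E ψ) - μ • E ψ)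
    have h' := norm_le_norm_add_norm_sub' (V (ψ - E ψ) - μ • (ψ - E ψ) + (V (E ψ) - μ • E ψ)) (V (E ψ) - μ • E ψ)
    have : ‖V (ψ - E ψ) - μ • (ψ - E ψ)‖ ≤
        ‖V (ψ - E ψ) - μ • (ψ - E ψ) + (V (E ψ) - μ • E ψ)‖ + ‖V (E ψ) - μ • E ψ‖ := by
      calc ‖V (ψ - E ψ) - μ • (ψ - E ψ)‖
          = ‖(V (ψ - E ψ) - μ • (ψ - E ψ) + (V (E ψ) - μ • E ψ)) - (V (E ψ) - μ • E ψ)‖ := by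
            congr 1; abel
        _ ≤ _ := norm_sub_le _ _
    linarith
  have hfinal : ‖V ψ - μ • ψ‖ - ε * ‖Φ‖ ≤ ‖(V + (ε : ℂ) • Φ) ψ - μ • ψ‖ := by
    have heq : (V + (ε : ℂ) • Φ) ψ - μ • ψ = (V ψ - μ • ψ) + (ε : ℂ) • Φ ψ := by
      simp [ContinuousLinearMap.add_apply, ContinuousLinearMap.smul_apply]; abel
    rw [heq]
    have : ‖V ψ - μ • ψ‖ ≤ ‖(V ψ - μ • ψ) + (ε : ℂ) • Φ ψ‖ + ‖(ε : ℂ) • Φ ψ‖ := by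
      calc ‖V ψ - μ • ψ‖ = ‖((V ψ - μ • ψ) + (ε : ℂ) • Φ ψ) - (ε : ℂ) • Φ ψ‖ := by
            congr 1; abel
        _ ≤ _ := norm_sub_le _ _
    linarith
  have hbound : ((β - α) / 2) * (1 - c * ε) ≤ ((β - α) / 2) * ‖ψ - E ψ‖ :=
    mul_le_mul_of_nonneg_left hnorm'' hg
  have hb : ‖V (E ψ) - μ • E ψ‖ ≤ ((β - α) / 2) * (c * ε) :=
    h2.trans (mul_le_mul_of_nonneg_left hEψ hg)
  linarith
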